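/- Closed-loop trajectories are uniformly bounded: if e, θ̂ : ℝ → ℝ^m are differentiable and satisfy e'(t) = −J(θ) · K_s · J(θ̂(t))ᵀ · e(t) and θ̂'(t) = −Γ⁻¹ · Y(e(t), θ̂(t))ᵀ · e(t) for all t ≥ 0, with K_s positive semidefinite, then for all t ≥ 0 one has ‖e(t)‖² ≤ 2·V(0) and ‖θ̂(t) − θ‖² ≤ (2/Γ)·V(0), where V(0) := (1/2)‖e(0)‖² + (Γ/2)‖θ̂(0) − θ‖². -/

import Mathlib

/-!
`V = ½‖e‖² + (Γ/2)‖θ̂ − θ‖²` is a Lyapunov function of the closed loop. Writing `A = C Kₛ Cᵀ`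
and `w = A (θ̂ ∘ e)`, the two terms of `V'` are `−eᵀ (θ ∘ w)` and `−(θ̂ − θ)ᵀ (w ∘ e)`; the
unknown `θ` cancels between them, leaving `V' = −(θ̂ ∘ e)ᵀ A (θ̂ ∘ e) ≤ 0`. Hence
`V(t) ≤ V(0)`, and each of the two nonnegative summands of `V(t)` is at most `V(0)`.
-/

open Matrix Filter Topology

/-- Deformation Jacobian `J(θ) = diag(θ) · C`. -/
noncomputable def defJac {m k : ℕ} (C : Matrix (Fin m) (Fin (3*k)) ℝ) (θ : Fin m → ℝ) :
    Matrix (Fin m) (Fin (3*k)) ℝ :=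
  Matrix.diagonal θ * C

/-- Regression matrix `Y(e, θ̂) = diag((C Kₛ Cᵀ diag(θ̂)) ·ᵥ e)`. -/
noncomputable def regY {m k : ℕ} (C : Matrix (Fin m) (Fin (3*k)) ℝ)
    (Ks : Matrix (Fin (3*k)) (Fin (3*k)) ℝ) (e θh : Fin m → ℝ) :
    Matrix (Fin m) (Fin m) ℝ :=
  Matrix.diagonal ((C * Ks * Cᵀ * Matrix.diagonal θh) *ᵥ e)

lemma diagonal_mulVec_eq_mul {n R : Type*} [Fintype n] [DecidableEq n]
    [NonUnitalNonAssocSemiring R] (v w : n → R) :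
    diagonal v *ᵥ w = v * w :=
  funext (mulVec_diagonal v w)

lemma dotProduct_mul_add_sub_dotProduct_mul {n R : Type*} [Fintype n] [CommRing R]
    (e θ θh w : n → R) :
    e ⬝ᵥ (θ * w) + (θh - θ) ⬝ᵥ (w * e) = (θh * e) ⬝ᵥ w := by
  simp only [dotProduct, ← Finset.sum_add_distrib, Pi.mul_apply, Pi.sub_apply]
  exact Finset.sum_congr rfl fun _ _ => by ring

lemma antitoneOn_Ici_of_hasDerivAt_nonpos {a : ℝ} {g g' : ℝ → ℝ}
    (hg : ∀ t ≥ a, HasDerivAt g (g' t) t) (hg' : ∀ t > a, g' t ≤ 0) :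
    AntitoneOn g (Set.Ici a) := by
  refine antitoneOn_of_hasDerivWithinAt_nonpos (f' := g') (convex_Ici a)
    (fun t ht => (hg t ht).continuousAt.continuousWithinAt) (fun t ht => ?_) (fun t ht => ?_)
  · rw [interior_Ici] at ht
    exact (hg t ht.le).hasDerivWithinAt
  · rw [interior_Ici] at ht
    exact hg' t ht

section Lyapunov

variable {F : Type*} [NormedAddCommGroup F]

noncomputable def adaptiveLyapunov (Γ : ℝ) (θ e θh : F) : ℝ :=
  1/2 * ‖e‖^2 + Γ/2 * ‖θh - θ‖^2

lemma norm_sq_le_of_adaptiveLyapunov_le {Γ V : ℝ} (hΓ : 0 < Γ) {θ e θh : F}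
    (h : adaptiveLyapunov Γ θ e θh ≤ V) :
    ‖e‖^2 ≤ 2 * V ∧ ‖θh - θ‖^2 ≤ (2/Γ) * V := by
  have he := sq_nonneg ‖e‖
  have hθ := mul_nonneg hΓ.le (sq_nonneg ‖θh - θ‖)
  unfold adaptiveLyapunov at h
  refine ⟨by linarith, ?_⟩
  rw [div_mul_eq_mul_div, le_div_iff₀ hΓ]
  linarith

lemma hasDerivAt_adaptiveLyapunov [InnerProductSpace ℝ F] {Γ : ℝ} {θ : F} {e θh : ℝ → F}
    {e' θh' : F} {t : ℝ} (he : HasDerivAt e e' t) (hθh : HasDerivAt θh θh' t) :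
    HasDerivAt (fun s => adaptiveLyapunov Γ θ (e s) (θh s))
      (inner ℝ (e t) e' + Γ * inner ℝ (θh t - θ) θh') t := by
  refine ((he.norm_sq.const_mul (1/2)).add
    ((hθh.sub_const θ).norm_sq.const_mul (Γ/2))).congr_deriv ?_
  ring

end Lyapunov

section ClosedLoop

variable {m k : ℕ} (C : Matrix (Fin m) (Fin (3*k)) ℝ) (Ks : Matrix (Fin (3*k)) (Fin (3*k)) ℝ)

lemma defJac_mul_mul_transpose_mulVec (θ θh e : Fin m → ℝ) :
    (defJac C θ * Ks * (defJac C θh)ᵀ) *ᵥ e = θ * ((C * Ks * Cᵀ) *ᵥ (θh * e)) := by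
  simp only [defJac, transpose_mul, diagonal_transpose, ← mulVec_mulVec, diagonal_mulVec_eq_mul]

lemma regY_transpose_mulVec (e θh : Fin m → ℝ) :
    (regY C Ks e θh)ᵀ *ᵥ e = ((C * Ks * Cᵀ) *ᵥ (θh * e)) * e := by
  rw [regY, diagonal_transpose, diagonal_mulVec_eq_mul, ← mulVec_mulVec, diagonal_mulVec_eq_mul]

lemma closedLoop_energy_identity (θ θh e : Fin m → ℝ) :
    e ⬝ᵥ ((defJac C θ * Ks * (defJac C θh)ᵀ) *ᵥ e) + (θh - θ) ⬝ᵥ ((regY C Ks e θh)ᵀ *ᵥ e)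
      = (θh * e) ⬝ᵥ ((C * Ks * Cᵀ) *ᵥ (θh * e)) := by
  rw [defJac_mul_mul_transpose_mulVec, regY_transpose_mulVec,
    dotProduct_mul_add_sub_dotProduct_mul]

variable {Ks}

lemma closedLoop_lyapunov_deriv_nonpos (hKs : Ks.PosSemidef) {Γ : ℝ} (hΓ : Γ ≠ 0)
    (θ θh e : EuclideanSpace ℝ (Fin m)) :
    inner ℝ e (WithLp.toLp 2 (-((defJac C θ * Ks * (defJac C θh)ᵀ) *ᵥ e)))
      + Γ * inner ℝ (θh - θ) (WithLp.toLp 2 (-(Γ⁻¹ • ((regY C Ks e θh)ᵀ *ᵥ e)))) ≤ 0 := by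
  have hA : (C * Ks * Cᵀ).PosSemidef := by simpa using hKs.mul_mul_conjTranspose_same C
  have hdiss := hA.dotProduct_mulVec_nonneg (θh * e)
  rw [star_trivial, ← closedLoop_energy_identity C Ks θ.ofLp] at hdiss
  simp only [EuclideanSpace.inner_eq_star_dotProduct, star_trivial, WithLp.ofLp_sub,
    neg_dotProduct, dotProduct_neg, smul_dotProduct, smul_eq_mul, dotProduct_comm _ e.ofLp,
    dotProduct_comm ((regY C Ks _ _)ᵀ *ᵥ _)]
  field_simp
  linarith

end ClosedLoop

theorem closed_loop_trajectories_bounded_general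
    (m k : ℕ)
    (C : Matrix (Fin m) (Fin (3*k)) ℝ)
    (Ks : Matrix (Fin (3*k)) (Fin (3*k)) ℝ) (hKs : Ks.PosSemidef)
    (Γ : ℝ) (hΓ : 0 < Γ)
    (θ : EuclideanSpace ℝ (Fin m))
    (e θh : ℝ → EuclideanSpace ℝ (Fin m))
    (hdyn : ∀ t ≥ (0:ℝ),
      HasDerivAt e (WithLp.toLp 2 (-((defJac C θ * Ks * (defJac C (θh t))ᵀ) *ᵥ e t))) t)
    (hupd : ∀ t ≥ (0:ℝ),
      HasDerivAt θh (WithLp.toLp 2 (-(Γ⁻¹ • ((regY C Ks (e t) (θh t))ᵀ *ᵥ e t)))) t)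
    (V0 : ℝ)
    (hV0 : V0 = (1/2) * ‖e 0‖^2 + (Γ/2) * ‖θh 0 - θ‖^2) :
    ∀ t ≥ (0:ℝ), ‖e t‖^2 ≤ 2 * V0 ∧ ‖θh t - θ‖^2 ≤ (2/Γ) * V0 := by
  have hV : AntitoneOn (fun t => adaptiveLyapunov Γ θ (e t) (θh t)) (Set.Ici 0) :=
    antitoneOn_Ici_of_hasDerivAt_nonpos
      (fun t ht => hasDerivAt_adaptiveLyapunov (hdyn t ht) (hupd t ht))
      (fun t _ => closedLoop_lyapunov_deriv_nonpos C hKs hΓ.ne' θ (θh t) (e t))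
  intro t ht
  exact norm_sq_le_of_adaptiveLyapunov_le hΓ ((hV Set.self_mem_Ici ht ht).trans hV0.ge)

/-- closed-loop trajectories are uniformly bounded in terms of the initial
Lyapunov level: `‖e(t)‖² ≤ 2 V(0)` and `‖θ̂(t) − θ‖² ≤ (2/Γ) V(0)` for all `t ≥ 0`. -/
theorem closed_loop_trajectories_bounded
    (m k : ℕ) (hm : 0 < m) (hk : 0 < k)
    (C : Matrix (Fin m) (Fin (3*k)) ℝ)
    (Ks : Matrix (Fin (3*k)) (Fin (3*k)) ℝ) (hKs : Ks.PosSemidef)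
    (Γ : ℝ) (hΓ : 0 < Γ)
    (θ : EuclideanSpace ℝ (Fin m))
    (e θh : ℝ → EuclideanSpace ℝ (Fin m))
    (hdyn : ∀ t ≥ (0:ℝ),
      HasDerivAt e (WithLp.toLp 2 (-((defJac C θ * Ks * (defJac C (θh t))ᵀ) *ᵥ e t))) t)
    (hupd : ∀ t ≥ (0:ℝ),
      HasDerivAt θh (WithLp.toLp 2 (-(Γ⁻¹ • ((regY C Ks (e t) (θh t))ᵀ *ᵥ e t)))) t)
    (V0 : ℝ)
    (hV0 : V0 = (1/2) * ‖e 0‖^2 + (Γ/2) * ‖θh 0 - θ‖^2) :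
    ∀ t ≥ (0:ℝ), ‖e t‖^2 ≤ 2 * V0 ∧ ‖θh t - θ‖^2 ≤ (2/Γ) * V0 :=
  closed_loop_trajectories_bounded_general m k C Ks hKs Γ hΓ θ e θh hdyn hupd V0 hV0
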